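/- Let S be a finite set of n points in ℝ² such that no line of ℝ² contains more than ν points of S. Then any plane in ℝ³ contains at most ν² of the lines h_{p,q} with p, q ∈ S. -/

import Mathlib

/-!
The line `h_{p,q}` passes through `(q, 0)` and has direction `(-p, 1)`. So it lies in the plane
`v₁ ξ + v₂ η + v₃ t = c` exactly when `q` lies on the line `v₁ x + v₂ y = c` and `p` on the
line `v₁ x + v₂ y = v₃`; the pairs `(p, q)` are thus confined to a product of two collinear
subsets of `S`, each of size at most `ν`. When `v₁ = v₂ = 0` the condition on `p` reads
`v₃ = 0`, so no line lies in the plane.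
-/

/-- The set of homotheties `(ξ, η, t)`, acting as `x ↦ t • x + (ξ, η)`, that map `p` to `q`. -/
def homLine (p q : ℝ × ℝ) : Set (ℝ × ℝ × ℝ) :=
  {w | w.2.2 • p + (w.1, w.2.1) = q}

lemma mem_homLine (p q : ℝ × ℝ) (t : ℝ) : (q.1 - t * p.1, q.2 - t * p.2, t) ∈ homLine p q := by
  simp only [homLine, Set.mem_ofPred_eq, Prod.ext_iff, Prod.fst_add, Prod.snd_add,
    Prod.smul_fst, Prod.smul_snd, smul_eq_mul]
  constructor <;> ring

section Plane

variable {v₁ v₂ v₃ c : ℝ}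

lemma eq_of_homLine_subset_plane {p q : ℝ × ℝ}
    (h : homLine p q ⊆ {w : ℝ × ℝ × ℝ | v₁ * w.1 + v₂ * w.2.1 + v₃ * w.2.2 = c}) :
    v₁ * p.1 + v₂ * p.2 = v₃ ∧ v₁ * q.1 + v₂ * q.2 = c := by
  have h₀ : v₁ * (q.1 - 0 * p.1) + v₂ * (q.2 - 0 * p.2) + v₃ * 0 = c := h (mem_homLine p q 0)
  have h₁ : v₁ * (q.1 - 1 * p.1) + v₂ * (q.2 - 1 * p.2) + v₃ * 1 = c := h (mem_homLine p q 1)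
  constructor <;> linarith

variable (v₁ v₂ v₃ c)

lemma ncard_homLine_subset_plane_le (S : Finset (ℝ × ℝ)) :
    Set.ncard {pq : (ℝ × ℝ) × (ℝ × ℝ) | pq.1 ∈ S ∧ pq.2 ∈ S ∧
        homLine pq.1 pq.2 ⊆ {w : ℝ × ℝ × ℝ | v₁ * w.1 + v₂ * w.2.1 + v₃ * w.2.2 = c}} ≤
      (S.filter (fun x => v₁ * x.1 + v₂ * x.2 = v₃)).card *
        (S.filter (fun x => v₁ * x.1 + v₂ * x.2 = c)).card := by
  classical
  rw [← Finset.card_product, ← Set.ncard_coe_finset]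
  refine Set.ncard_le_ncard ?_ (Finset.finite_toSet _)
  rintro ⟨p, q⟩ ⟨hp, hq, hpq⟩
  obtain ⟨hp', hq'⟩ := eq_of_homLine_subset_plane hpq
  simp [hp, hq, hp', hq']

end Plane

/-- If no line of ℝ² contains more than `ν` points of `S`, then any plane in ℝ³ contains
at most `ν²` of the lines `h_{p,q}` with `p, q ∈ S`. -/
theorem stmt_4 (S : Finset (ℝ × ℝ)) (ν : ℕ)
    (hν : ∀ a b c : ℝ, (a, b) ≠ (0, 0) →
      (S.filter (fun x => a * x.1 + b * x.2 = c)).card ≤ ν)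
    (v₁ v₂ v₃ c : ℝ) (hv : (v₁, v₂, v₃) ≠ (0, 0, 0)) :
    Set.ncard {pq : (ℝ × ℝ) × (ℝ × ℝ) | pq.1 ∈ S ∧ pq.2 ∈ S ∧
        homLine pq.1 pq.2 ⊆ {w : ℝ × ℝ × ℝ | v₁ * w.1 + v₂ * w.2.1 + v₃ * w.2.2 = c}} ≤
      ν ^ 2 := by
  refine (ncard_homLine_subset_plane_le v₁ v₂ v₃ c S).trans ?_
  by_cases h₁₂ : (v₁, v₂) = (0, 0)
  · obtain ⟨rfl, rfl⟩ := Prod.ext_iff.mp h₁₂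
    have hv₃ : (0 : ℝ) ≠ v₃ := by rintro rfl; exact hv rfl
    simp [hv₃]
  · rw [sq]
    exact Nat.mul_le_mul (hν _ _ _ h₁₂) (hν _ _ _ h₁₂)
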